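/- Let w be an infinite word over {1,…,d}, n ∈ ℕ, and M the flow matrix of w for length n. Then dim ker(M) = p_w(n+1) − p_w(n) + 1 (over ℚ or over ℝ). -/
import Mathlib


attribute [local instance] Classical.propDecidable

/-- `u : Fin n → Fin d` occurs as a factor (block of consecutive letters) of `w`. -/
def Occurs {d : ℕ} (w : ℕ → Fin d) (n : ℕ) (u : Fin n → Fin d) : Prop :=
  ∃ i, ∀ k : Fin n, u k = w (i + k)

/-- The set of factors of length `n` of `w`, as a subtype. -/
abbrev Fac {d : ℕ} (w : ℕ → Fin d) (n : ℕ) : Type :=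
  {u : Fin n → Fin d // Occurs w n u}

noncomputable instance {d : ℕ} (w : ℕ → Fin d) (n : ℕ) : Fintype (Fac w n) :=
  Fintype.ofFinite _

/-- The complexity of `w`: the number of factors of length `n`. -/
noncomputable def complexity {d : ℕ} (w : ℕ → Fin d) (n : ℕ) : ℕ :=
  Nat.card (Fac w n)

/-- `v` starts with `u` (`u` is the length-`n` prefix of the length-`(n+1)` word `v`). -/
def StartsWith {d n : ℕ} (v : Fin (n + 1) → Fin d) (u : Fin n → Fin d) : Prop :=
  ∀ k : Fin n, v k.castSucc = u k

/-- `v` ends with `u` (`u` is the length-`n` suffix of the length-`(n+1)` word `v`). -/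
def EndsWith {d n : ℕ} (v : Fin (n + 1) → Fin d) (u : Fin n → Fin d) : Prop :=
  ∀ k : Fin n, v k.succ = u k

/-- The flow matrix of `w` for length `n`, with entries in `K`:
`M u v = 1` if `v` starts but does not end with `u`, `-1` if `v` ends but does not
start with `u`, and `0` otherwise. -/
noncomputable def flowMatrix {d : ℕ} (w : ℕ → Fin d) (n : ℕ) (K : Type*) [Ring K] :
    Matrix (Fac w n) (Fac w (n + 1)) K :=
  fun u v => (if StartsWith v.1 u.1 then 1 else 0) - (if EndsWith v.1 u.1 then 1 else 0)

namespace Stmt15Aux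

open Matrix

variable {d : ℕ} (w : ℕ → Fin d)

/-- The factor of length `n` at position `i`. -/
def facAt (n i : ℕ) : Fac w n := ⟨fun k => w (i + k), i, fun _ => rfl⟩

lemma facAt_surj {n : ℕ} (u : Fac w n) : ∃ i, u = facAt w n i := by
  obtain ⟨i, h⟩ := u.2
  exact ⟨i, Subtype.ext (funext h)⟩

instance (n : ℕ) : Nonempty (Fac w n) := ⟨facAt w n 0⟩

/-- The prefix of a length `n+1` factor. -/
def preF {n : ℕ} (v : Fac w (n + 1)) : Fac w n :=
  ⟨fun k => v.1 k.castSucc, by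
    obtain ⟨i, h⟩ := v.2
    exact ⟨i, fun k => by simpa [Fin.coe_castSucc] using h k.castSucc⟩⟩

/-- The suffix of a length `n+1` factor. -/
def sufF {n : ℕ} (v : Fac w (n + 1)) : Fac w n :=
  ⟨fun k => v.1 k.succ, by
    obtain ⟨i, h⟩ := v.2
    refine ⟨i + 1, fun k => ?_⟩
    show v.1 k.succ = w (i + 1 + k)
    rw [h k.succ, Fin.val_succ]
    congr 1
    omega⟩

lemma starts_iff {n : ℕ} (v : Fac w (n + 1)) (u : Fac w n) :
    StartsWith v.1 u.1 ↔ u = preF w v := by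
  constructor
  · intro h
    exact Subtype.ext (funext fun k => (h k).symm)
  · rintro rfl k
    rfl

lemma ends_iff {n : ℕ} (v : Fac w (n + 1)) (u : Fac w n) :
    EndsWith v.1 u.1 ↔ u = sufF w v := by
  constructor
  · intro h
    exact Subtype.ext (funext fun k => (h k).symm)
  · rintro rfl k
    rfl

lemma preF_facAt (n i : ℕ) : preF w (facAt w (n + 1) i) = facAt w n i :=
  Subtype.ext (funext fun k => by simp [preF, facAt, Fin.coe_castSucc])

lemma sufF_facAt (n i : ℕ) : sufF w (facAt w (n + 1) i) = facAt w n (i + 1) :=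
  Subtype.ext (funext fun k => by
    simp only [sufF, facAt, Fin.val_succ]
    congr 1
    omega)

variable (K : Type*) [Field K]

lemma transpose_mulVecLin_apply {n : ℕ} (x : Fac w n → K) (v : Fac w (n + 1)) :
    ((flowMatrix w n K)ᵀ.mulVecLin x) v = x (preF w v) - x (sufF w v) := by
  simp only [Matrix.mulVecLin_apply, Matrix.mulVec, dotProduct, Matrix.transpose_apply,
    flowMatrix, starts_iff, ends_iff, sub_mul, ite_mul, one_mul, zero_mul,
    Finset.sum_sub_distrib, Finset.sum_ite_eq', Finset.mem_univ, if_true]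

lemma ker_transpose {n : ℕ} :
    LinearMap.ker ((flowMatrix w n K)ᵀ.mulVecLin) =
      Submodule.span K {(fun _ => 1 : Fac w n → K)} := by
  ext x
  rw [LinearMap.mem_ker, Submodule.mem_span_singleton]
  constructor
  · intro hx
    have h0 : ∀ v, x (preF w v) - x (sufF w v) = 0 := fun v => by
      rw [← transpose_mulVecLin_apply, hx]; rfl
    have hstep : ∀ i, x (facAt w n (i + 1)) = x (facAt w n i) := by
      intro i
      have := h0 (facAt w (n + 1) i)
      rw [preF_facAt, sufF_facAt, sub_eq_zero] at this
      exact this.symm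
    have hconst : ∀ i, x (facAt w n i) = x (facAt w n 0) := by
      intro i
      induction i with
      | zero => rfl
      | succ i ih => rw [hstep]; exact ih
    refine ⟨x (facAt w n 0), funext fun u => ?_⟩
    obtain ⟨i, rfl⟩ := facAt_surj w u
    simp [hconst i, mul_comm]
  · rintro ⟨c, rfl⟩
    ext v
    rw [transpose_mulVecLin_apply]
    simp

lemma finrank_ker_transpose {n : ℕ} :
    Module.finrank K (LinearMap.ker ((flowMatrix w n K)ᵀ.mulVecLin)) = 1 := by
  rw [ker_transpose]
  refine finrank_span_singleton ?_
  intro h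
  have := congrFun h (facAt w n 0)
  simp at this

lemma complexity_mono (n : ℕ) : complexity w n ≤ complexity w (n + 1) := by
  have hinj : Function.Injective
      (fun u : Fac w n => facAt w (n + 1) (Classical.choose u.2)) := by
    intro u u' h
    have hu : u = facAt w n (Classical.choose u.2) :=
      Subtype.ext (funext (Classical.choose_spec u.2))
    have hu' : u' = facAt w n (Classical.choose u'.2) :=
      Subtype.ext (funext (Classical.choose_spec u'.2))
    have := congrArg (preF w) h
    rwa [preF_facAt, preF_facAt, ← hu, ← hu'] at this
  exact Nat.card_le_card_of_injective _ hinj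

lemma key (n : ℕ) :
    Module.finrank K (LinearMap.ker ((flowMatrix w n K).mulVecLin)) =
      complexity w (n + 1) - complexity w n + 1 := by
  set M := flowMatrix w n K
  have h1 : M.rank + Module.finrank K (LinearMap.ker M.mulVecLin) =
      complexity w (n + 1) := by
    rw [Matrix.rank, LinearMap.finrank_range_add_finrank_ker,
      Module.finrank_fintype_fun_eq_card, complexity, Nat.card_eq_fintype_card]
  have h2 : Mᵀ.rank + Module.finrank K (LinearMap.ker Mᵀ.mulVecLin) = complexity w n := by
    rw [Matrix.rank, LinearMap.finrank_range_add_finrank_ker,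
      Module.finrank_fintype_fun_eq_card, complexity, Nat.card_eq_fintype_card]
  rw [finrank_ker_transpose] at h2
  rw [Matrix.rank_transpose] at h2
  have h3 := complexity_mono w n
  omega

end Stmt15Aux

theorem stmt15 {d : ℕ} (w : ℕ → Fin d) (n : ℕ) :
    Module.finrank ℚ (LinearMap.ker ((flowMatrix w n ℚ).mulVecLin)) =
      complexity w (n + 1) - complexity w n + 1 ∧
    Module.finrank ℝ (LinearMap.ker ((flowMatrix w n ℝ).mulVecLin)) =
      complexity w (n + 1) - complexity w n + 1 := by
  exact ⟨Stmt15Aux.key w ℚ n, Stmt15Aux.key w ℝ n⟩
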